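/- Let T be an S₁×⋯×S_N-setting source operator for a state ρ on ℂ^{d₁}⊗⋯⊗ℂ^{d_N}, and let M_n^{(s_n)} be POVMs on ℂ^{d_n} with finite outcome sets Λ_n. Then the real-valued function μ_T on Λ₁^{S₁}×⋯×Λ_N^{S_N} defined by μ_T(λ₁^{(1)},…,λ₁^{(S₁)},…,λ_N^{(1)},…,λ_N^{(S_N)}) = tr[T (M₁^{(1)}(λ₁^{(1)})⊗⋯⊗M₁^{(S₁)}(λ₁^{(S₁)})⊗⋯⊗M_N^{(1)}(λ_N^{(1)})⊗⋯⊗M_N^{(S_N)}(λ_N^{(S_N)}))] is real, normalized, returns all joint distributions P_{(s₁,…,s_N)}(λ₁,…,λ_N) = tr[ρ (M₁^{(s₁)}(λ₁)⊗⋯⊗M_N^{(s_N)}(λ_N))] of the quantum scenario as marginals, and satisfies 1 ≤ ‖μ_T‖_var ≤ ‖T‖_cov. -/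

import Mathlib

open scoped ComplexOrder Matrix
open MeasureTheory ProbabilityTheory

namespace LqHV

/-- Entrywise tensor (Kronecker) product of a finite family of square complex matrices,
realized on the pi-type index. -/
def tprod {ι : Type} [Fintype ι] [DecidableEq ι] {κ : ι → Type} [∀ i, Fintype (κ i)]
    (X : ∀ i, Matrix (κ i) (κ i) ℂ) : Matrix (∀ i, κ i) (∀ i, κ i) ℂ :=
  fun a b => ∏ i, X i (a i) (b i)

/-- Elementary (product) vector of a family of vectors. -/
def tvec {ι : Type} [Fintype ι] [DecidableEq ι] {κ : ι → Type} (ψ : ∀ i, κ i → ℂ) : (∀ i, κ i) → ℂ :=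
  fun a => ∏ i, ψ i (a i)

/-- Tensor positivity of a matrix on a tensor product space. -/
def TensorPos {ι : Type} [Fintype ι] [DecidableEq ι] {κ : ι → Type} [∀ i, Fintype (κ i)]
    (Z : Matrix (∀ i, κ i) (∀ i, κ i) ℂ) : Prop :=
  ∀ ψ : ∀ i, κ i → ℂ, 0 ≤ star (tvec ψ) ⬝ᵥ Z.mulVec (tvec ψ)

/-- `C` is a covering of `Z`. -/
def IsCovering {ι : Type} [Fintype ι] [DecidableEq ι] {κ : ι → Type} [∀ i, Fintype (κ i)]
    (Z C : Matrix (∀ i, κ i) (∀ i, κ i) ℂ) : Prop :=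
  TensorPos C ∧ TensorPos (C + Z) ∧ TensorPos (C - Z)

/-- The covering norm. -/
noncomputable def covNorm {ι : Type} [Fintype ι] [DecidableEq ι] {κ : ι → Type} [∀ i, Fintype (κ i)]
    (Z : Matrix (∀ i, κ i) (∀ i, κ i) ℂ) : ℝ :=
  sInf ((fun C => (Matrix.trace C).re) '' {C | IsCovering Z C})

/-- The absolute value `√(Wᴴ W)` of a matrix. -/
noncomputable def matAbs {n : Type} [Fintype n] [DecidableEq n]
    (W : Matrix n n ℂ) : Matrix n n ℂ :=
  (Matrix.posSemidef_conjTranspose_mul_self W).1.eigenvectorUnitary.1 *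
    Matrix.diagonal ((↑) ∘ Real.sqrt ∘ (Matrix.posSemidef_conjTranspose_mul_self W).1.eigenvalues) *
    (star (Matrix.posSemidef_conjTranspose_mul_self W).1.eigenvectorUnitary : Matrix n n ℂ)

/-- The trace norm `tr √(Wᴴ W)`. -/
noncomputable def traceNorm {n : Type} [Fintype n] [DecidableEq n]
    (W : Matrix n n ℂ) : ℝ :=
  ((matAbs W).trace).re

variable {N : ℕ}

/-- In the tensor product space `⊗_n (ℂ^{d n})^{⊗ S n}`, the operator that acts as `X n` in
slot `k n` of site `n` and as the identity elsewhere. -/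
def slot {d S : Fin N → ℕ} (X : ∀ n, Matrix (Fin (d n)) (Fin (d n)) ℂ) (k : ∀ n, Fin (S n)) :
    ∀ p : Σ n : Fin N, Fin (S n), Matrix (Fin (d p.1)) (Fin (d p.1)) ℂ :=
  fun p => if p.2 = k p.1 then X p.1 else 1

/-- `T` is an `S₁ × ⋯ × S_N`-setting source operator for the state `ρ`. -/
def IsSourceOp (d S : Fin N → ℕ) (ρ : Matrix (∀ n, Fin (d n)) (∀ n, Fin (d n)) ℂ)
    (T : Matrix (∀ p : Σ n : Fin N, Fin (S n), Fin (d p.1))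
          (∀ p : Σ n : Fin N, Fin (S n), Fin (d p.1)) ℂ) : Prop :=
  T.IsHermitian ∧
    ∀ (X : ∀ n, Matrix (Fin (d n)) (Fin (d n)) ℂ) (k : ∀ n, Fin (S n)),
      (T * tprod (slot X k)).trace = (ρ * tprod X).trace

/-- A POVM with finite outcome set. -/
def IsPOVM {d : ℕ} {Λ : Type} [Fintype Λ] (M : Λ → Matrix (Fin d) (Fin d) ℂ) : Prop :=
  (∀ l, (M l).PosSemidef) ∧ ∑ l, M l = 1

/-- Joint probability distributions of a quantum correlation scenario. -/
noncomputable def quantumP {d S : Fin N → ℕ} {Λ : Fin N → Type} [∀ n, Fintype (Λ n)]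
    (ρ : Matrix (∀ n, Fin (d n)) (∀ n, Fin (d n)) ℂ)
    (M : ∀ n, Fin (S n) → Λ n → Matrix (Fin (d n)) (Fin (d n)) ℂ)
    (s : ∀ n, Fin (S n)) (lam : ∀ n, Λ n) : ℝ :=
  ((ρ * tprod (fun n => M n (s n) (lam n))).trace).re

/-- A real-valued (signed) measure on the finite set `∏_n Λ_n^{S n}` is normalized. -/
def Normalized {S : Fin N → ℕ} {Λ : Fin N → Type} [∀ n, Fintype (Λ n)] [∀ n, DecidableEq (Λ n)]
    (μ : (∀ n, Fin (S n) → Λ n) → ℝ) : Prop :=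
  ∑ ω, μ ω = 1

/-- `μ` returns all joint distributions `P` of the scenario as the corresponding marginals. -/
def ReturnsMarginals {S : Fin N → ℕ} {Λ : Fin N → Type} [∀ n, Fintype (Λ n)]
    [∀ n, DecidableEq (Λ n)]
    (μ : (∀ n, Fin (S n) → Λ n) → ℝ) (P : (∀ n, Fin (S n)) → (∀ n, Λ n) → ℝ) : Prop :=
  ∀ (s : ∀ n, Fin (S n)) (lam : ∀ n, Λ n),
    (∑ ω : ∀ n, Fin (S n) → Λ n, if (fun n => ω n (s n)) = lam then μ ω else 0) = P s lam

/-- The total variation norm of a real-valued measure on a finite set. -/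
noncomputable def varNorm {S : Fin N → ℕ} {Λ : Fin N → Type} [∀ n, Fintype (Λ n)]
    [∀ n, DecidableEq (Λ n)] (μ : (∀ n, Fin (S n) → Λ n) → ℝ) : ℝ :=
  ∑ ω, |μ ω|

/-- The parameter `γ_E`: the infimum of the total variation norms over all normalized
real-valued measures returning all joint distributions of the scenario as marginals. -/
noncomputable def gammaE {S : Fin N → ℕ} {Λ : Fin N → Type} [∀ n, Fintype (Λ n)]
    [∀ n, DecidableEq (Λ n)] (P : (∀ n, Fin (S n)) → (∀ n, Λ n) → ℝ) : ℝ :=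
  sInf {t | ∃ μ, Normalized μ ∧ ReturnsMarginals μ P ∧ t = varNorm μ}

/-- Integration of a bounded function with respect to a signed measure, via the Jordan
decomposition. -/
noncomputable def signedIntegral {Ω : Type} [MeasurableSpace Ω] (ν : SignedMeasure Ω)
    (f : Ω → ℝ) : ℝ :=
  (∫ ω, f ω ∂ν.toJordanDecomposition.posPart) - ∫ ω, f ω ∂ν.toJordanDecomposition.negPart

/-- An `S₁ × ⋯ × S_N`-setting correlation scenario with finite outcome sets admits an LHV
(local hidden variable) model. -/
def AdmitsLHVFin {S : Fin N → ℕ} {Λ : Fin N → Type} [∀ n, Fintype (Λ n)]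
    (P : (∀ n, Fin (S n)) → (∀ n, Λ n) → ℝ) : Prop :=
  ∃ (Ω : Type) (_ : MeasurableSpace Ω) (ν : Measure Ω) (_ : IsProbabilityMeasure ν)
    (p : ∀ n, Fin (S n) → Ω → Λ n → ℝ),
    (∀ n s ω l, 0 ≤ p n s ω l) ∧ (∀ n s ω, ∑ l, p n s ω l = 1) ∧
    (∀ n s l, Measurable fun ω => p n s ω l) ∧
    ∀ (s : ∀ n, Fin (S n)) (lam : ∀ n, Λ n),
      P s lam = ∫ ω, ∏ n, p n (s n) ω (lam n) ∂ν

/-- An `S₁ × ⋯ × S_N`-setting correlation scenario with finite outcome sets admits an LqHV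
(local quasi hidden variable) model. -/
def AdmitsLqHVFin {S : Fin N → ℕ} {Λ : Fin N → Type} [∀ n, Fintype (Λ n)]
    (P : (∀ n, Fin (S n)) → (∀ n, Λ n) → ℝ) : Prop :=
  ∃ (Ω : Type) (_ : MeasurableSpace Ω) (ν : SignedMeasure Ω)
    (p : ∀ n, Fin (S n) → Ω → Λ n → ℝ),
    ν Set.univ = 1 ∧
    (∀ n s ω l, 0 ≤ p n s ω l) ∧ (∀ n s ω, ∑ l, p n s ω l = 1) ∧
    (∀ n s l, Measurable fun ω => p n s ω l) ∧
    ∀ (s : ∀ n, Fin (S n)) (lam : ∀ n, Λ n),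
      P s lam = signedIntegral ν fun ω => ∏ n, p n (s n) ω (lam n)

end LqHV

namespace LqHV

/-- The real-valued measure `μ_T` on `Λ₁^{S₁} × ⋯ × Λ_N^{S_N}` induced by a source operator
`T` and the POVMs `M`:
`μ_T(ω) = tr[T (M₁^{(1)}(ω₁^{(1)}) ⊗ ⋯ ⊗ M_N^{(S_N)}(ω_N^{(S_N)}))]`. -/
noncomputable def muT {N : ℕ} {d S : Fin N → ℕ} {Λ : Fin N → Type} [∀ n, Fintype (Λ n)]
    (T : Matrix (∀ p : Σ n : Fin N, Fin (S n), Fin (d p.1))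
          (∀ p : Σ n : Fin N, Fin (S n), Fin (d p.1)) ℂ)
    (M : ∀ n, Fin (S n) → Λ n → Matrix (Fin (d n)) (Fin (d n)) ℂ)
    (ω : ∀ n, Fin (S n) → Λ n) : ℝ :=
  ((T * tprod fun p : Σ n : Fin N, Fin (S n) => M p.1 p.2 (ω p.1 p.2)).trace).re

end LqHV

/-!
Summing `μ_T` over outcomes factorizes slot by slot and every POVM sums to the identity, so the
total mass is `tr T`, which testing the source-operator property against `X = 1` identifies with
`tr ρ = 1`. Likewise a marginal at settings `s` is `T` tested against `M(λ)` in the slots `s`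
and `1` elsewhere, i.e. `tr[ρ M(λ)]`. For a covering `C` of `T`, a tensor positive matrix pairs
nonnegatively with a product of positive semidefinite matrices (a sum of product rank-one
projectors), so `|μ_T(ω)| ≤ tr[C M(ω)]`, and these bounds sum to `tr C`.
-/

namespace LqHV

section TensorProduct

variable {ι : Type} [Fintype ι] [DecidableEq ι] {κ : ι → Type} [∀ i, Fintype (κ i)]

theorem tprod_conjTranspose (X : ∀ i, Matrix (κ i) (κ i) ℂ) :
    (tprod X)ᴴ = tprod fun i => (X i)ᴴ := by
  ext a b
  simp [tprod, Matrix.conjTranspose_apply]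

theorem isHermitian_tprod {X : ∀ i, Matrix (κ i) (κ i) ℂ} (hX : ∀ i, (X i).IsHermitian) :
    (tprod X).IsHermitian := by
  rw [Matrix.IsHermitian, tprod_conjTranspose]
  exact congrArg tprod (funext hX)

theorem tprod_one [∀ i, DecidableEq (κ i)] :
    tprod (fun i => (1 : Matrix (κ i) (κ i) ℂ)) = 1 := by
  ext a b
  by_cases h : a = b
  · subst h
    simp [tprod]
  · obtain ⟨i, hi⟩ := Function.ne_iff.mp h
    rw [Matrix.one_apply_ne h]
    exact Finset.prod_eq_zero (Finset.mem_univ i) (Matrix.one_apply_ne hi)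

theorem tprod_ite_zero (q : ι → Prop) [DecidablePred q] (X : ∀ i, Matrix (κ i) (κ i) ℂ) :
    tprod (fun i => if q i then X i else 0) = if ∀ i, q i then tprod X else 0 := by
  ext a b
  simp only [tprod, apply_ite (fun A : Matrix (κ _) (κ _) ℂ => A (a _) (b _)),
    Matrix.zero_apply, Finset.prod_ite_zero, Finset.mem_univ, true_implies]
  split_ifs <;> rfl

theorem sum_tprod {κ' : ι → Type} [∀ i, Fintype (κ' i)] (G : ∀ i, κ' i → Matrix (κ i) (κ i) ℂ) :
    ∑ f : ∀ i, κ' i, tprod (fun i => G i (f i)) = tprod fun i => ∑ l, G i l := by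
  ext a b
  simp only [tprod, Matrix.sum_apply]
  rw [Fintype.prod_sum]

theorem tprod_mul_conjTranspose_self {κ' : ι → Type} [∀ i, Fintype (κ' i)]
    (B : ∀ i, Matrix (κ i) (κ' i) ℂ) :
    tprod (fun i => B i * (B i)ᴴ) =
      ∑ J : ∀ i, κ' i, Matrix.vecMulVec (tvec fun i z => B i z (J i))
        (star (tvec fun i z => B i z (J i))) := by
  ext y x
  simp only [tprod, Matrix.sum_apply, Matrix.mul_apply, Matrix.conjTranspose_apply,
    Matrix.vecMulVec_apply, tvec, Pi.star_apply, star_prod]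
  rw [Fintype.prod_sum]
  exact Finset.sum_congr rfl fun J _ => Finset.prod_mul_distrib

theorem trace_mul_vecMulVec {R n : Type} [CommSemiring R] [Fintype n] (Z : Matrix n n R)
    (v w : n → R) : (Z * Matrix.vecMulVec v w).trace = w ⬝ᵥ Z *ᵥ v := by
  simp only [Matrix.trace, Matrix.diag, Matrix.mul_apply, Matrix.vecMulVec_apply,
    dotProduct, Matrix.mulVec, Finset.mul_sum]
  exact Finset.sum_congr rfl fun x _ => Finset.sum_congr rfl fun y _ => by ring

theorem tensorPos_of_posSemidef {Z : Matrix (∀ i, κ i) (∀ i, κ i) ℂ} (hZ : Z.PosSemidef) :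
    TensorPos Z :=
  fun ψ => hZ.dotProduct_mulVec_nonneg (tvec ψ)

theorem TensorPos.trace_mul_tprod_nonneg {Z : Matrix (∀ i, κ i) (∀ i, κ i) ℂ} (hZ : TensorPos Z)
    {A : ∀ i, Matrix (κ i) (κ i) ℂ} (hA : ∀ i, (A i).PosSemidef) :
    0 ≤ (Z * tprod A).trace := by
  classical
  have hB : ∀ i, ∃ B : Matrix (κ i) (κ i) ℂ, A i = B * Bᴴ := fun i => by
    open scoped MatrixOrder in
    obtain ⟨B, hAB⟩ := CStarAlgebra.nonneg_iff_eq_star_mul_self.mp (hA i).nonneg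
    exact ⟨Bᴴ, by simpa [Matrix.star_eq_conjTranspose] using hAB⟩
  choose B hB using hB
  rw [funext hB, tprod_mul_conjTranspose_self B, Matrix.mul_sum, Matrix.trace_sum]
  refine Finset.sum_nonneg fun J _ => ?_
  rw [trace_mul_vecMulVec]
  exact hZ _

theorem IsCovering.abs_re_trace_mul_tprod_le {Z C : Matrix (∀ i, κ i) (∀ i, κ i) ℂ}
    (hC : IsCovering Z C) {A : ∀ i, Matrix (κ i) (κ i) ℂ} (hA : ∀ i, (A i).PosSemidef) :
    |(Z * tprod A).trace.re| ≤ (C * tprod A).trace.re := by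
  have hadd := (Complex.le_def.mp (hC.2.1.trace_mul_tprod_nonneg hA)).1
  have hsub := (Complex.le_def.mp (hC.2.2.trace_mul_tprod_nonneg hA)).1
  rw [Matrix.add_mul, Matrix.trace_add, Complex.add_re] at hadd
  rw [Matrix.sub_mul, Matrix.trace_sub, Complex.sub_re] at hsub
  rw [Complex.zero_re] at hadd hsub
  exact abs_le.mpr ⟨by linarith, by linarith⟩

open scoped MatrixOrder in
theorem exists_isCovering {Z : Matrix (∀ i, κ i) (∀ i, κ i) ℂ} (hZ : Z.IsHermitian) :
    ∃ C, IsCovering Z C := by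
  classical
  obtain ⟨P, Q, hP, hQ, rfl⟩ := IsSelfAdjoint.exists_nonneg_sub_nonneg hZ.isSelfAdjoint
  rw [Matrix.nonneg_iff_posSemidef] at hP hQ
  refine ⟨P + Q, tensorPos_of_posSemidef (hP.add hQ), ?_, ?_⟩
  · rw [show P + Q + (P - Q) = P + P by abel]
    exact tensorPos_of_posSemidef (hP.add hP)
  · rw [show P + Q - (P - Q) = Q + Q by abel]
    exact tensorPos_of_posSemidef (hQ.add hQ)

theorem le_covNorm {Z : Matrix (∀ i, κ i) (∀ i, κ i) ℂ} (hZ : Z.IsHermitian) {x : ℝ}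
    (h : ∀ C, IsCovering Z C → x ≤ C.trace.re) : x ≤ covNorm Z := by
  obtain ⟨C₀, hC₀⟩ := exists_isCovering hZ
  refine le_csInf ⟨_, C₀, hC₀, rfl⟩ ?_
  rintro _ ⟨C, hC, rfl⟩
  exact h C hC

end TensorProduct

theorem im_trace_mul_eq_zero_of_isHermitian {n : Type} [Fintype n] {A B : Matrix n n ℂ}
    (hA : A.IsHermitian) (hB : B.IsHermitian) : (A * B).trace.im = 0 := by
  have hconj : star (A * B).trace = (A * B).trace := by
    rw [← Matrix.trace_conjTranspose, Matrix.conjTranspose_mul, hA.eq, hB.eq,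
      Matrix.trace_mul_comm]
  exact Complex.conj_eq_iff_im.mp hconj

theorem sum_tprod_sigma {α : Type} [Fintype α] [DecidableEq α] {β : α → Type}
    [∀ a, Fintype (β a)] [∀ a, DecidableEq (β a)] {κ : (Σ a, β a) → Type} [∀ p, Fintype (κ p)]
    {Λ : α → Type} [∀ a, Fintype (Λ a)] (F : ∀ p : Σ a, β a, Λ p.1 → Matrix (κ p) (κ p) ℂ) :
    ∑ ω : ∀ a, β a → Λ a, tprod (fun p => F p (ω p.1 p.2)) = tprod fun p => ∑ l, F p l := by
  rw [← sum_tprod F, ← Equiv.sum_comp (Equiv.piCurry fun a (_ : β a) => Λ a)]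
  rfl

section Scenario

variable {N : ℕ} {d S : Fin N → ℕ} {Λ : Fin N → Type} [∀ n, Fintype (Λ n)]
  {M : ∀ n, Fin (S n) → Λ n → Matrix (Fin (d n)) (Fin (d n)) ℂ}
  {T : Matrix (∀ p : Σ n : Fin N, Fin (S n), Fin (d p.1))
    (∀ p : Σ n : Fin N, Fin (S n), Fin (d p.1)) ℂ}

theorem IsSourceOp.trace_eq (hS : ∀ n, 1 ≤ S n) {ρ : Matrix (∀ n, Fin (d n)) (∀ n, Fin (d n)) ℂ}
    (hT : IsSourceOp d S ρ T) : T.trace = ρ.trace := by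
  have h := hT.2 (fun _ => 1) (fun n => ⟨0, hS n⟩)
  have hslot : slot (fun n => (1 : Matrix (Fin (d n)) (Fin (d n)) ℂ)) (fun n => ⟨0, hS n⟩) =
      fun _ => 1 := funext fun _ => ite_self _
  rwa [hslot, tprod_one, tprod_one, mul_one, mul_one] at h

theorem sum_tprod_povm (hM : ∀ n s, IsPOVM (M n s)) :
    ∑ ω : ∀ n, Fin (S n) → Λ n, tprod (fun p : Σ n : Fin N, Fin (S n) => M p.1 p.2 (ω p.1 p.2))
      = 1 := by
  rw [sum_tprod_sigma fun (p : Σ n : Fin N, Fin (S n)) l => M p.1 p.2 l]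
  simp only [fun n s => (hM n s).2]
  exact tprod_one

theorem sum_ite_tprod_povm [∀ n, DecidableEq (Λ n)] (hM : ∀ n s, IsPOVM (M n s))
    (s : ∀ n, Fin (S n)) (lam : ∀ n, Λ n) :
    ∑ ω : ∀ n, Fin (S n) → Λ n, (if (fun n => ω n (s n)) = lam then
        tprod (fun p : Σ n : Fin N, Fin (S n) => M p.1 p.2 (ω p.1 p.2)) else 0)
      = tprod (slot (fun n => M n (s n) (lam n)) s) := by
  have hmarg (ω : ∀ n, Fin (S n) → Λ n) : (fun n => ω n (s n)) = lam ↔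
      ∀ p : Σ n : Fin N, Fin (S n), p.2 = s p.1 → ω p.1 p.2 = lam p.1 := by
    refine ⟨fun h p hp => hp ▸ congrFun h p.1, fun h => funext fun n => h ⟨n, s n⟩ rfl⟩
  calc _ = ∑ ω : ∀ n, Fin (S n) → Λ n, tprod (fun p : Σ n : Fin N, Fin (S n) =>
        if p.2 = s p.1 → ω p.1 p.2 = lam p.1 then M p.1 p.2 (ω p.1 p.2) else 0) := by
        refine Finset.sum_congr rfl fun ω _ => ?_
        rw [tprod_ite_zero]
        exact if_congr (hmarg ω) rfl rfl
    _ = tprod fun p : Σ n : Fin N, Fin (S n) =>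
        ∑ l, if p.2 = s p.1 → l = lam p.1 then M p.1 p.2 l else 0 :=
      sum_tprod_sigma fun (p : Σ n : Fin N, Fin (S n)) l =>
        if p.2 = s p.1 → l = lam p.1 then M p.1 p.2 l else 0
    _ = _ := by
      refine congrArg tprod (funext fun p => ?_)
      by_cases hp : p.2 = s p.1
      · simp [slot, hp]
      · simp [slot, hp, (hM _ _).2]

theorem sum_muT (hM : ∀ n s, IsPOVM (M n s)) : ∑ ω, muT T M ω = T.trace.re := by
  simp only [muT]
  rw [← Complex.re_sum, ← Matrix.trace_sum, ← Matrix.mul_sum, sum_tprod_povm hM, mul_one]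

theorem sum_ite_muT [∀ n, DecidableEq (Λ n)] (hM : ∀ n s, IsPOVM (M n s))
    (s : ∀ n, Fin (S n)) (lam : ∀ n, Λ n) :
    (∑ ω : ∀ n, Fin (S n) → Λ n, if (fun n => ω n (s n)) = lam then muT T M ω else 0) =
      (T * tprod (slot (fun n => M n (s n) (lam n)) s)).trace.re := by
  rw [← sum_ite_tprod_povm hM, Matrix.mul_sum, Matrix.trace_sum, Complex.re_sum]
  refine Finset.sum_congr rfl fun ω _ => ?_
  split_ifs
  · rfl
  · simp

theorem one_le_varNorm [∀ n, DecidableEq (Λ n)] {μ : (∀ n, Fin (S n) → Λ n) → ℝ}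
    (hμ : Normalized μ) : 1 ≤ varNorm μ :=
  calc (1 : ℝ) = |∑ ω, μ ω| := by rw [hμ, abs_one]
    _ ≤ varNorm μ := Finset.abs_sum_le_sum_abs _ _

theorem varNorm_muT_le_re_trace [∀ n, DecidableEq (Λ n)] (hM : ∀ n s, IsPOVM (M n s))
    {C : Matrix (∀ p : Σ n : Fin N, Fin (S n), Fin (d p.1))
      (∀ p : Σ n : Fin N, Fin (S n), Fin (d p.1)) ℂ} (hC : IsCovering T C) :
    varNorm (muT T M) ≤ C.trace.re :=
  calc varNorm (muT T M)
      ≤ ∑ ω : ∀ n, Fin (S n) → Λ n,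
          (C * tprod fun p : Σ n : Fin N, Fin (S n) => M p.1 p.2 (ω p.1 p.2)).trace.re :=
        Finset.sum_le_sum fun ω _ => hC.abs_re_trace_mul_tprod_le fun p => (hM _ _).1 _
    _ = C.trace.re := by
        rw [← Complex.re_sum, ← Matrix.trace_sum, ← Matrix.mul_sum, sum_tprod_povm hM, mul_one]

end Scenario

end LqHV

open LqHV in
theorem muT_properties_general {N : ℕ} (d S : Fin N → ℕ) (hS : ∀ n, 1 ≤ S n)
    {Λ : Fin N → Type} [∀ n, Fintype (Λ n)] [∀ n, DecidableEq (Λ n)]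
    (ρ : Matrix (∀ n, Fin (d n)) (∀ n, Fin (d n)) ℂ)
    (hρtr : ρ.trace = 1)
    (T : Matrix (∀ p : Σ n : Fin N, Fin (S n), Fin (d p.1))
          (∀ p : Σ n : Fin N, Fin (S n), Fin (d p.1)) ℂ)
    (hT : IsSourceOp d S ρ T)
    (M : ∀ n, Fin (S n) → Λ n → Matrix (Fin (d n)) (Fin (d n)) ℂ)
    (hM : ∀ n s, IsPOVM (M n s)) :
    (∀ ω : ∀ n, Fin (S n) → Λ n,
        ((T * tprod fun p : Σ n : Fin N, Fin (S n) => M p.1 p.2 (ω p.1 p.2)).trace).im = 0) ∧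
      Normalized (muT T M) ∧
      ReturnsMarginals (muT T M) (quantumP ρ M) ∧
      1 ≤ varNorm (muT T M) ∧ varNorm (muT T M) ≤ covNorm T := by
  have hnorm : Normalized (muT T M) := by
    rw [Normalized, sum_muT hM, hT.trace_eq hS, hρtr, Complex.one_re]
  refine ⟨fun ω => ?_, hnorm, fun s lam => ?_, one_le_varNorm hnorm,
    le_covNorm hT.1 fun C hC => varNorm_muT_le_re_trace hM hC⟩
  · exact im_trace_mul_eq_zero_of_isHermitian hT.1
      (isHermitian_tprod fun p => ((hM p.1 p.2).1 _).isHermitian)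
  · rw [sum_ite_muT hM, hT.2]
    rfl

open LqHV in
/-- **Lemma 4.** For a source operator `T` for `ρ` and POVMs `M`, the function `μ_T` is
real-valued, normalized, returns all joint distributions of the quantum scenario as
marginals, and satisfies `1 ≤ ‖μ_T‖_var ≤ ‖T‖_cov`. -/
theorem muT_properties {N : ℕ} (d S : Fin N → ℕ) (hS : ∀ n, 1 ≤ S n)
    {Λ : Fin N → Type} [∀ n, Fintype (Λ n)] [∀ n, DecidableEq (Λ n)]
    (ρ : Matrix (∀ n, Fin (d n)) (∀ n, Fin (d n)) ℂ)
    (hρ : ρ.PosSemidef) (hρtr : ρ.trace = 1)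
    (T : Matrix (∀ p : Σ n : Fin N, Fin (S n), Fin (d p.1))
          (∀ p : Σ n : Fin N, Fin (S n), Fin (d p.1)) ℂ)
    (hT : IsSourceOp d S ρ T)
    (M : ∀ n, Fin (S n) → Λ n → Matrix (Fin (d n)) (Fin (d n)) ℂ)
    (hM : ∀ n s, IsPOVM (M n s)) :
    (∀ ω : ∀ n, Fin (S n) → Λ n,
        ((T * tprod fun p : Σ n : Fin N, Fin (S n) => M p.1 p.2 (ω p.1 p.2)).trace).im = 0) ∧
      Normalized (muT T M) ∧
      ReturnsMarginals (muT T M) (quantumP ρ M) ∧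
      1 ≤ varNorm (muT T M) ∧ varNorm (muT T M) ≤ covNorm T :=
  muT_properties_general d S hS ρ hρtr T hT M hM
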